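/- Let A(x) := a(x)^{−1/4} and define the second-order WKB function w(x) := A(x) e^{(i/ε)φ(x)}, with φ(x) := ∫_0^x (√(a(τ)) − ε² b(τ)) dτ and b := −A''/(2 a^{1/4}). Then w satisfies the Schrödinger equation up to an explicit residual of order ε³: ε² w''(x) + a(x) w(x) = −ε³ ( i (2 b(x) A'(x) + b'(x) A(x)) + ε b(x)² A(x) ) e^{(i/ε)φ(x)} for all x ∈ (0,1). In particular, ε²w'' + a w = O(ε³) uniformly on [0,1]. -/

import Mathlib

open Set

/-- `A(x) := a(x)^{-1/4}`. -/
noncomputable def Afun (a : ℝ → ℝ) (x : ℝ) : ℝ := a x ^ (-(1 : ℝ) / 4)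

/-- `b(x) := -(1/(2 a(x)^{1/4})) * (a^{-1/4})''(x) = -A''(x)/(2 a(x)^{1/4})`. -/
noncomputable def bfun (a : ℝ → ℝ) (x : ℝ) : ℝ :=
  -(1 / (2 * a x ^ ((1 : ℝ) / 4))) * deriv (deriv (fun t => a t ^ (-(1 : ℝ) / 4))) x

/-- The phase `φ(x) := ∫_0^x (√(a(τ)) - ε² b(τ)) dτ`. -/
noncomputable def phase (a : ℝ → ℝ) (ε x : ℝ) : ℝ :=
  ∫ τ in (0 : ℝ)..x, (Real.sqrt (a τ) - ε ^ 2 * bfun a τ)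

/-- The second-order WKB function `w(x) := A(x) e^{(i/ε)φ(x)}`. -/
noncomputable def wfun (a : ℝ → ℝ) (ε x : ℝ) : ℂ :=
  (Afun a x : ℝ) * Complex.exp (Complex.I / (ε : ℂ) * (phase a ε x : ℂ))

section WKBaux

variable {a : ℝ → ℝ}

lemma hUopen (hc : Continuous a) : IsOpen {x : ℝ | 0 < a x} :=
  isOpen_lt continuous_const hc

lemma bfun_eq : bfun a = fun x => -(1 / (2 * a x ^ ((1 : ℝ) / 4))) * deriv (deriv (Afun a)) x :=
  rfl

lemma contDiffOn_rpow_comp (ha : ContDiff ℝ (⊤ : ℕ∞) a) (p : ℝ) :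
    ContDiffOn ℝ (⊤ : ℕ∞) (fun x => a x ^ p) {x : ℝ | 0 < a x} := fun x hx =>
  ((Real.contDiffAt_rpow_const_of_ne (ne_of_gt hx)).comp x ha.contDiffAt).contDiffWithinAt

lemma cd_A (ha : ContDiff ℝ (⊤ : ℕ∞) a) : ContDiffOn ℝ (⊤ : ℕ∞) (Afun a) {x : ℝ | 0 < a x} :=
  contDiffOn_rpow_comp ha _

lemma cd_A1 (ha : ContDiff ℝ (⊤ : ℕ∞) a) : ContDiffOn ℝ (⊤ : ℕ∞) (deriv (Afun a)) {x : ℝ | 0 < a x} :=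
  (cd_A ha).deriv_of_isOpen (hUopen ha.continuous) (by simp)

lemma cd_A2 (ha : ContDiff ℝ (⊤ : ℕ∞) a) :
    ContDiffOn ℝ (⊤ : ℕ∞) (deriv (deriv (Afun a))) {x : ℝ | 0 < a x} :=
  (cd_A1 ha).deriv_of_isOpen (hUopen ha.continuous) (by simp)

lemma cd_b (ha : ContDiff ℝ (⊤ : ℕ∞) a) : ContDiffOn ℝ (⊤ : ℕ∞) (bfun a) {x : ℝ | 0 < a x} := by
  rw [bfun_eq]
  refine ContDiffOn.mul (ContDiffOn.neg ?_) (cd_A2 ha)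
  refine ContDiffOn.div contDiffOn_const (contDiffOn_const.mul (contDiffOn_rpow_comp ha _)) ?_
  intro x hx
  have : 0 < a x := hx
  positivity

lemma cd_b1 (ha : ContDiff ℝ (⊤ : ℕ∞) a) : ContDiffOn ℝ (⊤ : ℕ∞) (deriv (bfun a)) {x : ℝ | 0 < a x} :=
  (cd_b ha).deriv_of_isOpen (hUopen ha.continuous) (by simp)

lemma hdA (ha : ContDiff ℝ (⊤ : ℕ∞) a) {x : ℝ} (hx : 0 < a x) :
    HasDerivAt (Afun a) (deriv (Afun a) x) x :=
  (((cd_A ha).differentiableOn (by simp)).differentiableAt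
    ((hUopen ha.continuous).mem_nhds hx)).hasDerivAt

lemma hdA1 (ha : ContDiff ℝ (⊤ : ℕ∞) a) {x : ℝ} (hx : 0 < a x) :
    HasDerivAt (deriv (Afun a)) (deriv (deriv (Afun a)) x) x :=
  (((cd_A1 ha).differentiableOn (by simp)).differentiableAt
    ((hUopen ha.continuous).mem_nhds hx)).hasDerivAt

lemma hdb (ha : ContDiff ℝ (⊤ : ℕ∞) a) {x : ℝ} (hx : 0 < a x) :
    HasDerivAt (bfun a) (deriv (bfun a) x) x :=
  (((cd_b ha).differentiableOn (by simp)).differentiableAt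
    ((hUopen ha.continuous).mem_nhds hx)).hasDerivAt

lemma hds (ha : ContDiff ℝ (⊤ : ℕ∞) a) {x : ℝ} (hx : 0 < a x) :
    HasDerivAt (fun y => Real.sqrt (a y)) (deriv a x / (2 * Real.sqrt (a x))) x :=
  ((ha.differentiable (by simp) x).hasDerivAt).sqrt hx.ne'

lemma cont_integrand (ha : ContDiff ℝ (⊤ : ℕ∞) a) (ε : ℝ) :
    ContinuousOn (fun τ => Real.sqrt (a τ) - ε ^ 2 * bfun a τ) {x : ℝ | 0 < a x} :=
  ((Real.continuous_sqrt.comp ha.continuous).continuousOn).sub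
    (continuousOn_const.mul (cd_b ha).continuousOn)

lemma hdphase (ha : ContDiff ℝ (⊤ : ℕ∞) a) (ε : ℝ) {x : ℝ}
    (hsub : uIcc (0 : ℝ) x ⊆ {y : ℝ | 0 < a y}) :
    HasDerivAt (phase a ε) (Real.sqrt (a x) - ε ^ 2 * bfun a x) x := by
  have hx : 0 < a x := hsub right_mem_uIcc
  exact intervalIntegral.integral_hasDerivAt_right
    (((cont_integrand ha ε).mono hsub).intervalIntegrable)
    ((cont_integrand ha ε).stronglyMeasurableAtFilter (hUopen ha.continuous) x hx)
    ((cont_integrand ha ε).continuousAt ((hUopen ha.continuous).mem_nhds hx))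

lemma K1 (ha : ContDiff ℝ (⊤ : ℕ∞) a) {x : ℝ} (hx : 0 < a x) :
    deriv a x / (2 * Real.sqrt (a x)) * Afun a x
      + 2 * Real.sqrt (a x) * deriv (Afun a) x = 0 := by
  have hA1 : deriv (Afun a) x = deriv a x * (-(1:ℝ)/4) * a x ^ (-(1:ℝ)/4 - 1) :=
    (((ha.differentiable (by simp) x).hasDerivAt).rpow_const (Or.inl hx.ne')).deriv
  have hs : Real.sqrt (a x) = a x ^ ((1:ℝ)/2) := Real.sqrt_eq_rpow (a x)
  have h1 : a x ^ ((1:ℝ)/2) * a x ^ (-(1:ℝ)/4 - 1) = a x ^ (-(3:ℝ)/4) := by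
    rw [← Real.rpow_add hx]; norm_num
  have h2 : a x ^ (-(1:ℝ)/4) / a x ^ ((1:ℝ)/2) = a x ^ (-(3:ℝ)/4) := by
    rw [← Real.rpow_sub hx]; norm_num
  rw [hA1, hs]
  unfold Afun
  rw [show deriv a x / (2 * a x ^ ((1:ℝ)/2)) * a x ^ (-(1:ℝ)/4)
      = deriv a x / 2 * (a x ^ (-(1:ℝ)/4) / a x ^ ((1:ℝ)/2)) from by ring,
    h2,
    show 2 * a x ^ ((1:ℝ)/2) * (deriv a x * (-(1:ℝ)/4) * a x ^ (-(1:ℝ)/4 - 1))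
      = deriv a x * (-(1:ℝ)/2) * (a x ^ ((1:ℝ)/2) * a x ^ (-(1:ℝ)/4 - 1)) from by ring,
    h1]
  ring

lemma K2 (ha : ContDiff ℝ (⊤ : ℕ∞) a) {x : ℝ} (hx : 0 < a x) :
    deriv (deriv (Afun a)) x + 2 * Real.sqrt (a x) * bfun a x * Afun a x = 0 := by
  have ht : (0:ℝ) < a x ^ ((1:ℝ)/4) := Real.rpow_pos_of_pos hx _
  have hsA : Real.sqrt (a x) * Afun a x = a x ^ ((1:ℝ)/4) := by
    rw [Real.sqrt_eq_rpow]
    unfold Afun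
    rw [← Real.rpow_add hx]
    norm_num
  have hb : bfun a x = -(1 / (2 * a x ^ ((1:ℝ)/4))) * deriv (deriv (Afun a)) x := rfl
  rw [hb]
  field_simp
  linear_combination (-deriv (deriv (Afun a)) x) * hsA

theorem wkb_key (ha : ContDiff ℝ (⊤ : ℕ∞) a) {ε : ℝ} (hεne : ε ≠ 0) {V : Set ℝ} (hVo : IsOpen V)
    (hVsub : ∀ y ∈ V, uIcc (0:ℝ) y ⊆ {t : ℝ | 0 < a t}) {x : ℝ} (hx : x ∈ V) :
    (ε : ℂ) ^ 2 * deriv (deriv (wfun a ε)) x + (a x : ℂ) * wfun a ε x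
        = -(ε : ℂ) ^ 3 *
            (Complex.I * (2 * (bfun a x : ℂ) * ((deriv (Afun a) x : ℝ) : ℂ)
                + ((deriv (bfun a) x : ℝ) : ℂ) * (Afun a x : ℂ))
              + (ε : ℂ) * (bfun a x : ℂ) ^ 2 * (Afun a x : ℂ)) *
            Complex.exp (Complex.I / (ε : ℂ) * (phase a ε x : ℂ)) := by
  have hxU : 0 < a x := hVsub x hx right_mem_uIcc
  -- step 1 : first derivative of w on V
  have hW1 : ∀ y ∈ V, HasDerivAt (wfun a ε)
      ((((deriv (Afun a) y : ℝ) : ℂ) + Complex.I / (ε : ℂ)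
          * ((Real.sqrt (a y) : ℂ) - (ε : ℂ) ^ 2 * (bfun a y : ℂ)) * ((Afun a y : ℝ) : ℂ))
        * Complex.exp (Complex.I / (ε : ℂ) * (phase a ε y : ℂ))) y := by
    intro y hy
    have hyU : 0 < a y := hVsub y hy right_mem_uIcc
    have hE : HasDerivAt (fun t => Complex.exp (Complex.I / (ε : ℂ) * (phase a ε t : ℂ)))
        (Complex.exp (Complex.I / (ε : ℂ) * (phase a ε y : ℂ))
          * (Complex.I / (ε : ℂ) * ((Real.sqrt (a y) - ε ^ 2 * bfun a y : ℝ) : ℂ))) y :=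
      (((hdphase ha ε (hVsub y hy)).ofReal_comp).const_mul (Complex.I / (ε : ℂ))).cexp
    have h := ((hdA ha hyU).ofReal_comp).mul hE
    convert h using 1
    · rfl
    · rfl
    push_cast
    ring
  have hEv : deriv (wfun a ε) =ᶠ[nhds x] (fun y =>
      ((((deriv (Afun a) y : ℝ) : ℂ) + Complex.I / (ε : ℂ)
          * ((Real.sqrt (a y) : ℂ) - (ε : ℂ) ^ 2 * (bfun a y : ℂ)) * ((Afun a y : ℝ) : ℂ))
        * Complex.exp (Complex.I / (ε : ℂ) * (phase a ε y : ℂ)))) :=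
    Filter.eventuallyEq_of_mem (hVo.mem_nhds hx) (fun y hy => (hW1 y hy).deriv)
  -- step 2 : derivative of W1 at x
  have hE : HasDerivAt (fun t => Complex.exp (Complex.I / (ε : ℂ) * (phase a ε t : ℂ)))
      (Complex.exp (Complex.I / (ε : ℂ) * (phase a ε x : ℂ))
        * (Complex.I / (ε : ℂ) * ((Real.sqrt (a x) - ε ^ 2 * bfun a x : ℝ) : ℂ))) x :=
    (((hdphase ha ε (hVsub x hx)).ofReal_comp).const_mul (Complex.I / (ε : ℂ))).cexp
  have hP : HasDerivAt (fun y =>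
      (((deriv (Afun a) y : ℝ) : ℂ) + Complex.I / (ε : ℂ)
        * ((Real.sqrt (a y) : ℂ) - (ε : ℂ) ^ 2 * (bfun a y : ℂ)) * ((Afun a y : ℝ) : ℂ)))
      (((deriv (deriv (Afun a)) x : ℝ) : ℂ) + (Complex.I / (ε : ℂ)
          * (((deriv a x / (2 * Real.sqrt (a x)) : ℝ) : ℂ)
              - (ε : ℂ) ^ 2 * ((deriv (bfun a) x : ℝ) : ℂ))) * ((Afun a x : ℝ) : ℂ)
        + Complex.I / (ε : ℂ) * ((Real.sqrt (a x) : ℂ) - (ε : ℂ) ^ 2 * (bfun a x : ℂ))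
          * ((deriv (Afun a) x : ℝ) : ℂ)) x := by
    have h1 := (hdA1 ha hxU).ofReal_comp
    have h2 := ((hds ha hxU).ofReal_comp).sub (((hdb ha hxU).ofReal_comp).const_mul ((ε:ℂ)^2))
    have h3 := (h2.const_mul (Complex.I / (ε : ℂ))).mul ((hdA ha hxU).ofReal_comp)
    convert h1.add h3 using 1
    · rfl
    · rfl
    simp only [Pi.sub_apply]
    push_cast
    ring
  have hW2 := hP.mul hE
  have hdd : deriv (deriv (wfun a ε)) x = _ := (hEv.deriv_eq).trans hW2.deriv
  rw [hdd]
  -- step 3 : algebra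
  have hεC : (ε : ℂ) ≠ 0 := Complex.ofReal_ne_zero.2 hεne
  have hk1 : (ε : ℂ) * (Complex.I / (ε : ℂ)) = Complex.I := mul_div_cancel₀ _ hεC
  have hk2 : (ε : ℂ) ^ 2 * (Complex.I / (ε : ℂ)) ^ 2 = -1 := by
    calc (ε : ℂ) ^ 2 * (Complex.I / (ε : ℂ)) ^ 2
        = ((ε : ℂ) * (Complex.I / (ε : ℂ))) ^ 2 := by ring
      _ = -1 := by rw [hk1, Complex.I_sq]
  have hK1C := congrArg (Complex.ofReal) (K1 ha hxU)
  have hK2C := congrArg (Complex.ofReal) (K2 ha hxU)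
  push_cast at hK1C hK2C
  have hK3C : (Real.sqrt (a x) : ℂ) * (Real.sqrt (a x) : ℂ) = (a x : ℂ) := by
    rw [← Complex.ofReal_mul, Real.mul_self_sqrt hxU.le]
  unfold wfun
  push_cast
  set E := Complex.exp (Complex.I / (ε : ℂ) * (phase a ε x : ℂ)) with hEdef
  linear_combination (E * (ε:ℂ)^2 * (Complex.I / (ε:ℂ))) * hK1C
    + (E * (ε:ℂ)^2) * hK2C
    - (E * ((Afun a x : ℝ) : ℂ)) * hK3C
    - (E * (ε:ℂ)^3 * (((deriv (bfun a) x : ℝ):ℂ) * ((Afun a x : ℝ):ℂ)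
        + 2 * ((bfun a x : ℝ):ℂ) * ((deriv (Afun a) x : ℝ):ℂ))) * hk1
    + (E * (Real.sqrt (a x):ℂ) * (Real.sqrt (a x):ℂ) * ((Afun a x : ℝ):ℂ)
        - 2 * E * (ε:ℂ)^2 * (Real.sqrt (a x):ℂ) * ((bfun a x : ℝ):ℂ) * ((Afun a x : ℝ):ℂ)
        + E * (ε:ℂ)^4 * ((bfun a x : ℝ):ℂ)^2 * ((Afun a x : ℝ):ℂ)) * hk2

end WKBaux

/-- the second-order WKB function satisfies the Schrödinger equation up to an
explicit residual of order `ε³`: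
`ε²w'' + aw = -ε³ (i(2bA' + b'A) + ε b²A) e^{(i/ε)φ}` on `(0,1)`;
in particular `ε²w'' + aw = O(ε³)` uniformly on `[0,1]`. -/
theorem stmt15 (a : ℝ → ℝ) (a₀ ε : ℝ) (ha : ContDiff ℝ (⊤ : ℕ∞) a) (ha₀ : 0 < a₀)
    (haa : ∀ x ∈ Icc (0 : ℝ) 1, a₀ ≤ a x) (hε : 0 < ε) (hε1 : ε ≤ 1) :
    (∀ x ∈ Ioo (0 : ℝ) 1,
      (ε : ℂ) ^ 2 * deriv (deriv (wfun a ε)) x + (a x : ℂ) * wfun a ε x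
        = -(ε : ℂ) ^ 3 *
            (Complex.I * (2 * (bfun a x : ℂ) * ((deriv (Afun a) x : ℝ) : ℂ)
                + ((deriv (bfun a) x : ℝ) : ℂ) * (Afun a x : ℂ))
              + (ε : ℂ) * (bfun a x : ℂ) ^ 2 * (Afun a x : ℂ)) *
            Complex.exp (Complex.I / (ε : ℂ) * (phase a ε x : ℂ))) ∧
    ∃ C : ℝ, 0 < C ∧ ∀ ε' : ℝ, 0 < ε' → ε' ≤ 1 → ∀ x ∈ Icc (0 : ℝ) 1,
      ‖(ε' : ℂ) ^ 2 * deriv (deriv (wfun a ε')) x + (a x : ℂ) * wfun a ε' x‖ ≤ C * ε' ^ 3 := by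
  have hIccU : Icc (0:ℝ) 1 ⊆ {t : ℝ | 0 < a t} := fun x hx => lt_of_lt_of_le ha₀ (haa x hx)
  obtain ⟨δ, hδ, hth⟩ := (isCompact_Icc : IsCompact (Icc (0:ℝ) 1)).exists_thickening_subset_open
    (hUopen ha.continuous) hIccU
  have hVU : Ioo (-δ) (1+δ) ⊆ {t : ℝ | 0 < a t} := by
    intro y hy
    refine hth (Metric.mem_thickening_iff.2 ⟨max 0 (min 1 y), ⟨le_max_left _ _, ?_⟩, ?_⟩)
    · exact max_le (by norm_num) (min_le_left _ _)
    · rw [Real.dist_eq, abs_lt]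
      constructor
      · have h1 : min 1 y ≤ y := min_le_right _ _
        have h2 : max 0 (min 1 y) ≤ max 0 y := max_le_max le_rfl h1
        have h3 : max 0 y < y + δ := by
          rcases le_or_gt y 0 with h | h
          · have := hy.1; simp [max_eq_left h]; linarith
          · rw [max_eq_right h.le]; linarith
        linarith [h2.trans_lt h3]
      · have h4 : y - δ < max 0 (min 1 y) := by
          rcases le_or_gt y 1 with h | h
          · rw [min_eq_right h]
            have := le_max_right (0:ℝ) y
            linarith [le_max_right (0:ℝ) y]
          · rw [min_eq_left h.le]
            have := hy.2
            have : y - δ < 1 := by linarith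
            linarith [le_max_right (0:ℝ) (1:ℝ)]
        linarith
  have hVo : IsOpen (Ioo (-δ) (1+δ)) := isOpen_Ioo
  have h0V : (0:ℝ) ∈ Ioo (-δ) (1+δ) := by constructor <;> linarith
  have hVsub : ∀ y ∈ Ioo (-δ) (1+δ), uIcc (0:ℝ) y ⊆ {t : ℝ | 0 < a t} := fun y hy =>
    (Set.OrdConnected.uIcc_subset Set.ordConnected_Ioo h0V hy).trans hVU
  have hIccV : Icc (0:ℝ) 1 ⊆ Ioo (-δ) (1+δ) := fun y hy =>
    ⟨by linarith [hy.1], by linarith [hy.2]⟩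
  constructor
  · intro x hx
    exact wkb_key ha hε.ne' hVo hVsub (hIccV ⟨hx.1.le, hx.2.le⟩)
  · -- uniform bound
    set M : ℝ → ℝ := fun x => |2 * bfun a x * deriv (Afun a) x + deriv (bfun a) x * Afun a x|
      + bfun a x ^ 2 * |Afun a x| with hMdef
    have hMcont : ContinuousOn M (Icc (0:ℝ) 1) := by
      have hbc := ((cd_b ha).continuousOn).mono hIccU
      have hb1c := ((cd_b1 ha).continuousOn).mono hIccU
      have hAc := ((cd_A ha).continuousOn).mono hIccU
      have hA1c := ((cd_A1 ha).continuousOn).mono hIccU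
      exact ((((continuousOn_const.mul hbc).mul hA1c).add (hb1c.mul hAc)).abs).add
        ((hbc.pow 2).mul hAc.abs)
    obtain ⟨C, hC⟩ := isCompact_Icc.exists_bound_of_continuousOn hMcont
    refine ⟨max C 1, lt_of_lt_of_le one_pos (le_max_right _ _), ?_⟩
    intro ε' hε' hε'1 x hx
    rw [wkb_key ha hε'.ne' hVo hVsub (hIccV hx)]
    have hE1 : ‖Complex.exp (Complex.I / (ε' : ℂ) * (phase a ε' x : ℂ))‖ = 1 := by
      rw [show Complex.I / (ε' : ℂ) * (phase a ε' x : ℂ)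
          = ((phase a ε' x / ε' : ℝ) : ℂ) * Complex.I from by push_cast; ring]
      exact Complex.norm_exp_ofReal_mul_I _
    have hZeq : Complex.I * (2 * (bfun a x : ℂ) * ((deriv (Afun a) x : ℝ) : ℂ)
          + ((deriv (bfun a) x : ℝ) : ℂ) * (Afun a x : ℂ))
        + (ε' : ℂ) * (bfun a x : ℂ) ^ 2 * (Afun a x : ℂ)
        = ((2 * bfun a x * deriv (Afun a) x + deriv (bfun a) x * Afun a x : ℝ) : ℂ) * Complex.I
          + ((ε' * (bfun a x ^ 2 * Afun a x) : ℝ) : ℂ) := by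
      push_cast; ring
    rw [norm_mul, norm_mul, norm_neg, norm_pow, Complex.norm_real, Real.norm_eq_abs,
      abs_of_pos hε', hE1, mul_one, hZeq]
    have hZle : ‖((2 * bfun a x * deriv (Afun a) x + deriv (bfun a) x * Afun a x : ℝ) : ℂ)
          * Complex.I + ((ε' * (bfun a x ^ 2 * Afun a x) : ℝ) : ℂ)‖ ≤ max C 1 := by
      have h1 := norm_add_le (((2 * bfun a x * deriv (Afun a) x
        + deriv (bfun a) x * Afun a x : ℝ) : ℂ) * Complex.I)
        (((ε' * (bfun a x ^ 2 * Afun a x) : ℝ) : ℂ))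
      rw [norm_mul, Complex.norm_I, mul_one, Complex.norm_real, Complex.norm_real,
        Real.norm_eq_abs, Real.norm_eq_abs] at h1
      have h2 : |ε' * (bfun a x ^ 2 * Afun a x)| ≤ bfun a x ^ 2 * |Afun a x| := by
        rw [abs_mul, abs_of_pos hε', abs_mul, abs_pow, sq_abs]
        have := mul_le_of_le_one_left
          (mul_nonneg (sq_nonneg (bfun a x)) (abs_nonneg (Afun a x))) hε'1
        linarith
      have h3 : M x ≤ |M x| := le_abs_self _
      have h4 := hC x hx
      rw [Real.norm_eq_abs] at h4
      refine (h1.trans ?_).trans ((h3.trans h4).trans (le_max_left _ _))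
      rw [hMdef]
      dsimp only
      linarith
    calc ε' ^ 3 * ‖_‖ ≤ ε' ^ 3 * max C 1 := by
          exact mul_le_mul_of_nonneg_left hZle (by positivity)
      _ = max C 1 * ε' ^ 3 := mul_comm _ _
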